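/- arXiv:1909.03913 — 2 statements merged into one kernel-verified Lean document; each statement's English description precedes it below -/
import Mathlib

section
/- Let R be a ring, M an R-module, and Δ, X : M → M two R-linear endomorphisms satisfying Δ ∘ Δ = 0 and X ∘ Δ + Δ ∘ X = id_M. Then the kernel of Δ equals the image of Δ, the submodules ker Δ and X(ker Δ) are complementary in M (their sum is M and their intersection is 0), and Δ restricts to an R-module isomorphism from X(ker Δ) onto ker Δ; consequently M is isomorphic as an R-module to (ker Δ) ⊕ (ker Δ). -/
/-- If `Δ, X : M → M` are `R`-linear maps with `Δ² = 0` and `XΔ + ΔX = id`, then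
`ker Δ = range Δ`, the submodules `ker Δ` and `X(ker Δ)` are complementary in `M`,
`Δ` restricts to an isomorphism from `X(ker Δ)` onto `ker Δ`, and consequently
`M ≅ ker Δ ⊕ ker Δ` as `R`-modules. -/
theorem splitting_of_acyclic {R : Type*} [Ring R] {M : Type*} [AddCommGroup M] [Module R M]
    (Δ X : M →ₗ[R] M) (hΔ : Δ ∘ₗ Δ = 0) (hX : X ∘ₗ Δ + Δ ∘ₗ X = LinearMap.id) :
    LinearMap.ker Δ = LinearMap.range Δ ∧
    LinearMap.ker Δ ⊔ (LinearMap.ker Δ).map X = ⊤ ∧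
    LinearMap.ker Δ ⊓ (LinearMap.ker Δ).map X = ⊥ ∧
    (∃ e : ((LinearMap.ker Δ).map X) ≃ₗ[R] LinearMap.ker Δ,
      ∀ x : (LinearMap.ker Δ).map X, (e x : M) = Δ x) ∧
    Nonempty (M ≃ₗ[R] (LinearMap.ker Δ × LinearMap.ker Δ)) := by
  have hΔ' : ∀ m, Δ (Δ m) = 0 := fun m => congrFun (congrArg DFunLike.coe hΔ) m
  have hX' : ∀ m, X (Δ m) + Δ (X m) = m := fun m => congrFun (congrArg DFunLike.coe hX) m
  -- ker = range
  have hker : LinearMap.ker Δ = LinearMap.range Δ := by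
    apply le_antisymm
    · intro m hm
      have hm0 : Δ m = 0 := hm
      refine ⟨X m, ?_⟩
      have := hX' m
      rw [hm0, map_zero, zero_add] at this
      exact this
    · rintro _ ⟨m, rfl⟩
      exact hΔ' m
  -- sup = top
  have hsup : LinearMap.ker Δ ⊔ (LinearMap.ker Δ).map X = ⊤ := by
    rw [eq_top_iff]
    intro m _
    have hm : m = Δ (X m) + X (Δ m) := by
      have := hX' m; linear_combination (norm := abel) this.symm
    rw [hm]
    exact Submodule.add_mem _
      (Submodule.mem_sup_left (hΔ' (X m)))
      (Submodule.mem_sup_right ⟨Δ m, hΔ' m, rfl⟩)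
  -- inf = bot
  have hinf : LinearMap.ker Δ ⊓ (LinearMap.ker Δ).map X = ⊥ := by
    rw [eq_bot_iff]
    rintro y ⟨hy1, k, hk, rfl⟩
    have hk0 : Δ k = 0 := hk
    have hy0 : Δ (X k) = 0 := hy1
    have := hX' k
    rw [hk0, map_zero, zero_add, hy0] at this
    simp [← this]
  -- the restricted map Δ : X(ker Δ) → ker Δ
  let f : ((LinearMap.ker Δ).map X) →ₗ[R] LinearMap.ker Δ :=
    Δ.restrict (p := (LinearMap.ker Δ).map X) (q := LinearMap.ker Δ)
      (fun x _ => hΔ' x)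
  have hfinj : Function.Injective f := by
    intro a b hab
    have h1 : Δ (a : M) = Δ (b : M) := congrArg Subtype.val hab
    have h2 : Δ ((a : M) - (b : M)) = 0 := by rw [map_sub, h1, sub_self]
    have : ((a : M) - (b : M)) ∈ LinearMap.ker Δ ⊓ (LinearMap.ker Δ).map X :=
      ⟨h2, Submodule.sub_mem _ a.2 b.2⟩
    rw [hinf] at this
    exact Subtype.ext (by simpa [sub_eq_zero] using this)
  have hfsurj : Function.Surjective f := by
    rintro ⟨k, hk⟩
    refine ⟨⟨X k, k, hk, rfl⟩, ?_⟩
    apply Subtype.ext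
    have hk0 : Δ k = 0 := hk
    have := hX' k
    rw [hk0, map_zero, zero_add] at this
    exact this
  let e := LinearEquiv.ofBijective f ⟨hfinj, hfsurj⟩
  refine ⟨hker, hsup, hinf, ⟨e, fun x => rfl⟩, ?_⟩
  have hcompl : IsCompl (LinearMap.ker Δ) ((LinearMap.ker Δ).map X) :=
    ⟨disjoint_iff.mpr hinf, codisjoint_iff.mpr hsup⟩
  exact ⟨(Submodule.prodEquivOfIsCompl _ _ hcompl).symm.trans
    ((LinearEquiv.refl R _).prodCongr e)⟩
end

section
/- Let R be a ring and C a chain complex of R-modules. Suppose Δ, X : C → C are chain maps (commuting with the differential of C and of degree 0) such that Δ ∘ Δ = 0 and X ∘ Δ + Δ ∘ X = id_C. Then the degreewise kernels K_n = ker(Δ_n) form a subcomplex K of C, and C is isomorphic as a chain complex to the direct sum K ⊕ K; in particular, for every n the homology satisfies H_n(C) ≅ H_n(K) ⊕ H_n(K). -/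
open CategoryTheory Limits

/-- The subcomplex of a chain complex `C` of `R`-modules formed by the degreewise kernels
of a chain endomorphism `Δ : C ⟶ C`; its differentials are the restrictions of those of
`C` (which preserve kernels since `Δ` commutes with the differential). -/
noncomputable def kerComplex {R : Type*} [Ring R] (C : ChainComplex (ModuleCat R) ℤ)
    (Δ : C ⟶ C) : ChainComplex (ModuleCat R) ℤ where
  X n := ModuleCat.of R (LinearMap.ker (Δ.f n).hom)
  d i j := ModuleCat.ofHom (LinearMap.restrict (C.d i j).hom (p := LinearMap.ker (Δ.f i).hom)
      (q := LinearMap.ker (Δ.f j).hom) (fun x hx => by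
        simp only [LinearMap.mem_ker] at hx ⊢
        have h := congrArg (fun f => f.hom x) (Δ.comm i j)
        have h' : (C.d i j).hom ((Δ.f i).hom x) = (Δ.f j).hom ((C.d i j).hom x) := h
        rw [← h', hx, map_zero]))
  shape i j hij := by
    apply ModuleCat.hom_ext
    apply LinearMap.ext
    intro x
    apply Subtype.ext
    show (C.d i j).hom x.1 = (0 : C.X j)
    rw [C.shape i j hij]
    rfl
  d_comp_d' i j k _ _ := by
    apply ModuleCat.hom_ext
    apply LinearMap.ext
    intro x
    apply Subtype.ext
    exact congrArg (fun f => f.hom x.1) (C.d_comp_d i j k)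


section Aux
variable {R : Type*} [Ring R] (C : ChainComplex (ModuleCat R) ℤ) (Δ : C ⟶ C)

/-- Inclusion of the kernel subcomplex. -/
noncomputable def kerIncl : kerComplex C Δ ⟶ C where
  f n := ModuleCat.ofHom (LinearMap.ker (Δ.f n).hom).subtype
  comm' _ _ _ := rfl

/-- Corestriction of a chain map killed by `Δ`. -/
noncomputable def toKer (φ : C ⟶ C) (h : φ ≫ Δ = 0) : C ⟶ kerComplex C Δ where
  f n := ModuleCat.ofHom (LinearMap.codRestrict (LinearMap.ker (Δ.f n).hom) (φ.f n).hom (fun x => by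
    have := congrArg (fun ψ : C ⟶ C => (HomologicalComplex.Hom.f ψ n).hom x) h
    exact this))
  comm' i j _ := by
    apply ModuleCat.hom_ext
    apply LinearMap.ext
    intro x
    apply Subtype.ext
    exact congrArg (fun f => f.hom x) (φ.comm i j)

end Aux

/-- If `Δ, X : C ⟶ C` are chain endomorphisms of a chain complex of `R`-modules with
`Δ ∘ Δ = 0` and `X ∘ Δ + Δ ∘ X = id`, then `C` is isomorphic as a chain complex to the
direct sum of two copies of the subcomplex `K` of degreewise kernels of `Δ`; in
particular `Hₙ(C) ≅ Hₙ(K) ⊕ Hₙ(K)` for every `n`. -/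
theorem chainComplex_splitting_of_acyclic {R : Type*} [Ring R]
    (C : ChainComplex (ModuleCat R) ℤ) (Δ X : C ⟶ C)
    (hΔ : Δ ≫ Δ = 0) (hX : X ≫ Δ + Δ ≫ X = 𝟙 C) :
    Nonempty (C ≅ kerComplex C Δ ⊞ kerComplex C Δ) ∧
    ∀ n : ℤ, Nonempty (C.homology n ≅
      (kerComplex C Δ).homology n ⊞ (kerComplex C Δ).homology n) := by
  -- pointwise relations
  have hΔ' : ∀ n (x : C.X n), Δ.f n (Δ.f n x) = 0 := fun n x =>
    congrArg (fun ψ : C ⟶ C => (HomologicalComplex.Hom.f ψ n).hom x) hΔ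
  have hX' : ∀ n (x : C.X n), Δ.f n (X.f n x) + X.f n (Δ.f n x) = x := fun n x =>
    congrArg (fun ψ : C ⟶ C => (HomologicalComplex.Hom.f ψ n).hom x) hX
  -- ΔXΔ = Δ
  have hkey : ∀ n (z : C.X n), Δ.f n (X.f n (Δ.f n z)) = Δ.f n z := by
    intro n z
    have := hX' n (Δ.f n z)
    rwa [hΔ' n, map_zero, add_zero] at this
  -- ΔX = id on ker Δ
  have keyA : ∀ n (b : C.X n), Δ.f n b = 0 → Δ.f n (X.f n b) = b := by
    intro n b hb
    have := hX' n b
    rwa [hb, map_zero, add_zero] at this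
  have h1 : (X ≫ Δ) ≫ Δ = 0 := by rw [Category.assoc, hΔ, comp_zero]
  set t1 : C ⟶ kerComplex C Δ := toKer C Δ (X ≫ Δ) h1 with ht1
  set t2 : C ⟶ kerComplex C Δ := toKer C Δ Δ hΔ with ht2
  set g1 : kerComplex C Δ ⟶ C := kerIncl C Δ with hg1
  set g2 : kerComplex C Δ ⟶ C := kerIncl C Δ ≫ X ≫ Δ ≫ X with hg2
  have e11 : g1 ≫ t1 = 𝟙 (kerComplex C Δ) := by
    ext n a
    apply Subtype.ext
    show Δ.f n (X.f n a.1) = a.1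
    exact keyA n a.1 a.2
  have e12 : g1 ≫ t2 = 0 := by
    ext n a
    apply Subtype.ext
    show Δ.f n a.1 = 0
    exact a.2
  have e21 : g2 ≫ t1 = 0 := by
    ext n a
    apply Subtype.ext
    show Δ.f n (X.f n (X.f n (Δ.f n (X.f n a.1)))) = 0
    have h2 : X.f n (Δ.f n (X.f n a.1)) =
        X.f n a.1 - Δ.f n (X.f n (X.f n a.1)) :=
      eq_sub_of_add_eq' (hX' n (X.f n a.1))
    rw [h2, map_sub, map_sub, hkey n (X.f n (X.f n a.1)), sub_self]
  have e22 : g2 ≫ t2 = 𝟙 (kerComplex C Δ) := by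
    ext n a
    apply Subtype.ext
    show Δ.f n (X.f n (Δ.f n (X.f n a.1))) = a.1
    rw [hkey n (X.f n a.1), keyA n a.1 a.2]
  have esum : t1 ≫ g1 + t2 ≫ g2 = 𝟙 C := by
    ext n x
    show Δ.f n (X.f n x) + X.f n (Δ.f n (X.f n (Δ.f n x))) = x
    rw [hkey n x]
    exact hX' n x
  have e : C ≅ kerComplex C Δ ⊞ kerComplex C Δ :=
    { hom := biprod.lift t1 t2
      inv := biprod.desc g1 g2
      hom_inv_id := by rw [biprod.lift_desc, esum]
      inv_hom_id := by
        apply biprod.hom_ext'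
        · apply biprod.hom_ext <;> simp [e11, e12]
        · apply biprod.hom_ext <;> simp [e21, e22] }
  refine ⟨⟨e⟩, fun n => ?_⟩
  have : PreservesBinaryBiproducts
      (HomologicalComplex.homologyFunctor (ModuleCat R) (ComplexShape.down ℤ) n) :=
    preservesBinaryBiproducts_of_preservesBiproducts _
  exact ⟨(HomologicalComplex.homologyFunctor (ModuleCat R) _ n).mapIso e ≪≫
    (HomologicalComplex.homologyFunctor (ModuleCat R) _ n).mapBiprod _ _⟩
end
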